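/- Let $K = \mathbb{F}_q$ be a finite field, let $X$ be a finite subset of $\mathbb{A}^s = K^s$, let $I = I(X)$ be its vanishing ideal, let $\prec$ be a graded monomial order on $S$, and let $\Delta_\prec^p(I)_d$ be the set of monic standard polynomials of $S/I$ of degree exactly $d$. If $d \ge 2$ and the minimum distance of $C_X(d-1)$ satisfies $\delta(C_X(d-1)) > 1$, then $\delta(C_X(d)) = \deg(S/I) - \max\{\deg(S/(I,f)) \mid f \in \Delta_\prec^p(I)_d\}$. -/

import Mathlib

open MvPolynomial
open scoped MonomialOrder

variable {K : Type*} [Field K] {s : ℕ}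

/-- The exponent of the initial (leading) monomial of `f` with respect to the
monomial order `m` (it is `0` for `f = 0`). -/
noncomputable def leadExp (m : MonomialOrder (Fin s)) (f : MvPolynomial (Fin s) K) :
    Fin s →₀ ℕ :=
  m.toSyn.symm (f.support.sup fun a => m.toSyn a)

/-- The coefficient of the initial monomial of `f`; `f` is monic when this is `1`. -/
noncomputable def leadCoeff (m : MonomialOrder (Fin s)) (f : MvPolynomial (Fin s) K) : K :=
  f.coeff (leadExp m f)

/-- The initial monomial `in_≺(f)` of `f`, as a (monic) monomial of the polynomial ring. -/
noncomputable def leadMon (m : MonomialOrder (Fin s)) (f : MvPolynomial (Fin s) K) :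
    MvPolynomial (Fin s) K :=
  monomial (leadExp m f) (1 : K)

/-- The initial ideal `in_≺(I)` of an ideal `I`: the ideal generated by the initial
monomials of the nonzero elements of `I`. -/
noncomputable def initialIdeal (m : MonomialOrder (Fin s)) (I : Ideal (MvPolynomial (Fin s) K)) :
    Ideal (MvPolynomial (Fin s) K) :=
  Ideal.span { g | ∃ f ∈ I, f ≠ 0 ∧ g = leadMon m f }

/-- The footprint `Δ_≺(I)` of `S/I`: the set of standard monomials, i.e. the (monic)
monomials that do not belong to the initial ideal of `I`. -/
noncomputable def stdMonomials (m : MonomialOrder (Fin s)) (I : Ideal (MvPolynomial (Fin s) K)) :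
    Set (MvPolynomial (Fin s) K) :=
  { g | (∃ a : Fin s →₀ ℕ, g = monomial a (1 : K)) ∧ g ∉ initialIdeal m I }

/-- `KΔ_≺(I)`, the `K`-linear span of the standard monomials of `S/I`. -/
noncomputable def stdSpan (m : MonomialOrder (Fin s)) (I : Ideal (MvPolynomial (Fin s) K)) :
    Submodule K (MvPolynomial (Fin s) K) :=
  Submodule.span K (stdMonomials m I)

/-- A monomial order is graded if monomials are first compared by their total degrees. -/
def IsGradedOrder (m : MonomialOrder (Fin s)) : Prop :=
  ∀ a b : Fin s →₀ ℕ, a.degree < b.degree → a ≺[m] b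

/-- The vanishing ideal `I(X)` of a set of points `X ⊆ 𝔸^s = K^s`. -/
def affVanishingIdeal (X : Set (Fin s → K)) : Ideal (MvPolynomial (Fin s) K) where
  carrier := { f | ∀ x ∈ X, eval x f = 0 }
  add_mem' := by
    intro a b ha hb x hx
    simp [ha x hx, hb x hx]
  zero_mem' := by intro x hx; simp
  smul_mem' := by
    intro c f hf x hx
    simp [smul_eq_mul, hf x hx]

/-- The evaluation map `S → K^X`, `f ↦ (f(P₁),…,f(P_m))`, at the points of a finite
set `X` of points of `𝔸^s`. -/
noncomputable def evalMap (X : Finset (Fin s → K)) :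
    MvPolynomial (Fin s) K →ₗ[K] (X → K) where
  toFun f := fun x => eval (x : Fin s → K) f
  map_add' f g := by funext x; simp
  map_smul' c f := by funext x; simp [Algebra.smul_def]

/-- The degree `deg(S/I)`.  For the ideals considered in this paper `S/I` is a
zero-dimensional ring, and its degree (the normalized leading coefficient of the
affine Hilbert polynomial) equals `dim_K (S/I)` (and is `0` when `I = S`). -/
noncomputable def adeg (I : Ideal (MvPolynomial (Fin s) K)) : ℕ :=
  Module.finrank K (MvPolynomial (Fin s) K ⧸ I)

/-- The affine Hilbert function `H_I^a(d) = dim_K (S_{≤d}/I_{≤d})`, computed as the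
dimension of the image of `S_{≤d}` in `S/I`. -/
noncomputable def affineHilbert (I : Ideal (MvPolynomial (Fin s) K)) (d : ℕ) : ℕ :=
  Module.finrank K
    ((restrictTotalDegree (Fin s) K d).map (Submodule.restrictScalars K I).mkQ)

/-- The support `χ(D)` of a subcode `D ⊆ K^ι`. -/
def codeSupport {ι : Type*} (D : Submodule K (ι → K)) : Set ι :=
  { i | ∃ v ∈ D, v i ≠ 0 }

/-- The `r`-th generalized Hamming weight of a linear code `C ⊆ K^ι`: the minimum
size of the support of an `r`-dimensional subcode. -/
noncomputable def ghw {ι : Type*} (C : Submodule K (ι → K)) (r : ℕ) : ℕ :=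
  sInf { n | ∃ D : Submodule K (ι → K),
    D ≤ C ∧ Module.finrank K (↥D) = r ∧ (codeSupport D).ncard = n }

/-- The minimum distance of a linear code: the least Hamming weight of a nonzero
codeword. -/
noncomputable def minDist {ι : Type*} (C : Submodule K (ι → K)) : ℕ :=
  sInf { n | ∃ v ∈ C, v ≠ 0 ∧ ({ i : ι | v i ≠ 0 }).ncard = n }

/-- The affine torus `T = (K^*)^s`. -/
noncomputable def torus (K : Type*) [Field K] [Fintype K] (s : ℕ) : Finset (Fin s → K) :=
  letI := Classical.decEq K
  Finset.univ.filter fun x => ∀ i, x i ≠ 0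

/-- `V_d`: the set of squarefree (monic) monomials of degree `d`. -/
def sqfreeMonomials (K : Type*) [Field K] (s d : ℕ) : Set (MvPolynomial (Fin s) K) :=
  { g | ∃ a : Fin s →₀ ℕ, (∀ i, a i ≤ 1) ∧ a.degree = d ∧ g = monomial a (1 : K) }

/-- `V_{≤d}`: the set of squarefree (monic) monomials of degree at most `d`. -/
def sqfreeMonomialsLe (K : Type*) [Field K] (s d : ℕ) : Set (MvPolynomial (Fin s) K) :=
  { g | ∃ a : Fin s →₀ ℕ, (∀ i, a i ≤ 1) ∧ a.degree ≤ d ∧ g = monomial a (1 : K) }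

/-- `Δ_≺^p(I)_d`: the set of monic standard polynomials of `S/I` of degree exactly `d`. -/
def stdPolysOfDegree (m : MonomialOrder (Fin s)) (I : Ideal (MvPolynomial (Fin s) K))
    (d : ℕ) : Set (MvPolynomial (Fin s) K) :=
  { f | f ∈ stdSpan m I ∧ f ≠ 0 ∧ leadCoeff m f = 1 ∧ f.totalDegree = d }

/-!
Evaluation at the points of `X` identifies `S/I(X)` with `K^X`, and `S/(I(X), f)` with the
functions on the zeros of `f` in `X`; hence `deg(S/I(X)) = |X|` and
`deg(S/(I(X), f)) = |X| - wt(ev f)`, and the formula says that `δ(C_X(d))` is the weight of some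
monic standard polynomial of degree exactly `d`. Dividing by `I(X)` along the graded order writes
a minimum-weight codeword of `C_X(d)` as `ev r` with `r` standard of degree `≤ d`. If
`deg r < d`, the codeword lies in `C_X(d-1)`, so it has two points `x ≠ y` in its support; then
`(t_i - y_i) r` with `x_i ≠ y_i` is a lighter nonzero codeword of `C_X(d)`, a contradiction.
-/

section StandardPolynomials

variable (m : MonomialOrder (Fin s)) (I : Ideal (MvPolynomial (Fin s) K))

lemma monomial_one_mem_initialIdeal_iff (c : Fin s →₀ ℕ) :
    monomial c (1 : K) ∈ initialIdeal m I ↔ ∃ f ∈ I, f ≠ 0 ∧ m.degree f ≤ c := by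
  have hspan : initialIdeal m I = Ideal.span ((fun a => monomial a (1 : K)) ''
      {a | ∃ f ∈ I, f ≠ 0 ∧ a = m.degree f}) := by
    rw [initialIdeal, Set.image]
    congr 1
    ext g
    constructor
    · rintro ⟨f, hf, hf0, rfl⟩
      exact ⟨_, ⟨f, hf, hf0, rfl⟩, rfl⟩
    · rintro ⟨a, ⟨f, hf, hf0, rfl⟩, rfl⟩
      exact ⟨f, hf, hf0, rfl⟩
  classical
  simp [hspan, mem_ideal_span_monomial_image, support_monomial, and_assoc]

lemma mem_stdSpan_iff {r : MvPolynomial (Fin s) K} :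
    r ∈ stdSpan m I ↔ ∀ c ∈ r.support, monomial c (1 : K) ∉ initialIdeal m I := by
  classical
  constructor
  · intro hr
    induction hr using Submodule.span_induction with
    | mem g hg =>
      obtain ⟨⟨a, rfl⟩, ha⟩ := hg
      simpa [support_monomial] using ha
    | zero => simp
    | add f g _ _ hf hg =>
      exact fun c hc => (Finset.mem_union.mp (support_add hc)).elim (hf c) (hg c)
    | smul a f _ hf => exact fun c hc => hf c (support_smul hc)
  · intro hr
    rw [r.as_sum]
    refine Submodule.sum_mem _ fun c hc => ?_
    rw [← mul_one (coeff c r), ← smul_eq_mul, ← smul_monomial]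
    exact Submodule.smul_mem _ _ (Submodule.subset_span ⟨⟨c, rfl⟩, hr c hc⟩)

variable {m I}

lemma eq_zero_of_mem_stdSpan_of_mem {r : MvPolynomial (Fin s) K} (hr : r ∈ stdSpan m I)
    (hrI : r ∈ I) : r = 0 := by
  by_contra hr0
  exact (mem_stdSpan_iff m I).mp hr _ (m.degree_mem_support hr0)
    ((monomial_one_mem_initialIdeal_iff m I _).mpr ⟨r, hrI, hr0, le_rfl⟩)

variable (m I)

lemma exists_mem_stdSpan_sub_mem (f : MvPolynomial (Fin s) K) :
    ∃ r ∈ stdSpan m I, f - r ∈ I ∧ m.degree r ≼[m] m.degree f := by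
  obtain ⟨g, r, hfr, hdeg, hr⟩ := m.div_set (B := {b | b ∈ I ∧ b ≠ 0})
    (fun b hb => (m.leadingCoeff_ne_zero_iff.mpr hb.2).isUnit) f
  have hq : f - r = g.sum fun b p => p * (b : MvPolynomial (Fin s) K) := by
    rw [hfr, add_sub_cancel_right, Finsupp.linearCombination_apply]
    rfl
  refine ⟨r, (mem_stdSpan_iff m I).mpr fun c hc hcI => ?_, ?_, ?_⟩
  · obtain ⟨b, hbI, hb0, hbc⟩ := (monomial_one_mem_initialIdeal_iff m I c).mp hcI
    exact hr c hc b ⟨hbI, hb0⟩ hbc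
  · rw [hq]
    exact Ideal.sum_mem _ fun b _ => I.mul_mem_left _ b.2.1
  · have hqdeg : m.degree (f - r) ≼[m] m.degree f := by
      rw [hq]
      refine m.degree_sum_le.trans (Finset.sup_le fun b _ => ?_)
      simpa only [mul_comm] using hdeg b
    calc m.toSyn (m.degree r) = m.toSyn (m.degree (f - (f - r))) := by rw [sub_sub_cancel]
      _ ≤ m.toSyn (m.degree f) ⊔ m.toSyn (m.degree (f - r)) := m.degree_sub_le
      _ = m.toSyn (m.degree f) := sup_eq_left.mpr hqdeg

end StandardPolynomials

section Graded

variable {m : MonomialOrder (Fin s)}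

lemma IsGradedOrder.degree_le_degree (hm : IsGradedOrder m) {a b : Fin s →₀ ℕ}
    (h : a ≼[m] b) : a.degree ≤ b.degree :=
  not_lt.mp fun hlt => not_le.mpr (hm b a hlt) h

lemma IsGradedOrder.degree_degree_eq_totalDegree (hm : IsGradedOrder m)
    (f : MvPolynomial (Fin s) K) :
    (m.degree f).degree = f.totalDegree := by
  by_cases hf : f = 0
  · simp [hf]
  refine le_antisymm (le_totalDegree (m.degree_mem_support hf)) (Finset.sup_le fun b hb => ?_)
  exact hm.degree_le_degree (m.le_degree hb)

lemma IsGradedOrder.totalDegree_le_totalDegree (hm : IsGradedOrder m)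
    {f g : MvPolynomial (Fin s) K} (h : m.degree f ≼[m] m.degree g) :
    f.totalDegree ≤ g.totalDegree := by
  rw [← hm.degree_degree_eq_totalDegree, ← hm.degree_degree_eq_totalDegree]
  exact hm.degree_le_degree h

end Graded

section Evaluation

variable (X : Finset (Fin s → K))

lemma evalMap_apply (f : MvPolynomial (Fin s) K) (x : X) :
    evalMap X f x = eval (x : Fin s → K) f := rfl

lemma ker_evalMap :
    LinearMap.ker (evalMap X) = (affVanishingIdeal (X : Set (Fin s → K))).restrictScalars K := by
  ext f
  simp [funext_iff, evalMap_apply, affVanishingIdeal]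

lemma evalMap_surjective [Fintype K] : Function.Surjective (evalMap X) := by
  have hcomp :
      evalMap X = LinearMap.funLeft K K ((↑) : X → Fin s → K) ∘ₗ evalₗ K (Fin s) := rfl
  have hev : Function.Surjective (evalₗ K (Fin s)) :=
    LinearMap.range_eq_top.mp (top_unique (map_restrict_dom_evalₗ (K := K) (σ := Fin s) ▸
      LinearMap.map_le_range))
  rw [hcomp, LinearMap.coe_comp]
  exact (LinearMap.funLeft_surjective_of_injective _ _ _ Subtype.val_injective).comp hev

lemma adeg_affVanishingIdeal [Fintype K] :
    adeg (affVanishingIdeal (X : Set (Fin s → K))) = X.card := by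
  rw [adeg, ← (Submodule.Quotient.restrictScalarsEquiv K _).finrank_eq, ← ker_evalMap,
    (LinearMap.quotKerEquivOfSurjective _ (evalMap_surjective X)).finrank_eq,
    Module.finrank_fintype_fun_eq_card, Fintype.card_coe]

lemma affVanishingIdeal_sup_span_singleton [Fintype K] [DecidableEq K]
    (f : MvPolynomial (Fin s) K) :
    affVanishingIdeal (X : Set (Fin s → K)) ⊔ Ideal.span {f} =
      affVanishingIdeal (↑(X.filter fun x => eval x f = 0) : Set (Fin s → K)) := by
  refine le_antisymm (sup_le (fun g hg x hx => hg x (Finset.mem_filter.mp hx).1) ?_) fun g hg => ?_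
  · rw [Ideal.span_le, Set.singleton_subset_iff]
    exact fun x hx => (Finset.mem_filter.mp hx).2
  -- interpolate `g / f` on `X`; the quotient is irrelevant at the common zeros
  obtain ⟨h, hh⟩ :=
    evalMap_surjective X fun x => eval (x : Fin s → K) g / eval (x : Fin s → K) f
  have hgh : g - h * f ∈ affVanishingIdeal (X : Set (Fin s → K)) := by
    intro x hx
    have hhx : eval x h = eval x g / eval x f := congrFun hh ⟨x, hx⟩
    by_cases hfx : eval x f = 0
    · simp [hg x (Finset.mem_filter.mpr ⟨hx, hfx⟩), hfx]
    · simp [hhx, div_mul_cancel₀ _ hfx]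
  rw [← sub_add_cancel g (h * f)]
  exact Ideal.add_mem _ (Ideal.mem_sup_left hgh)
    (Ideal.mem_sup_right (Ideal.mul_mem_left _ _ (Ideal.mem_span_singleton_self f)))

lemma ncard_evalMap_ne_zero [DecidableEq K] (f : MvPolynomial (Fin s) K) :
    {x : X | evalMap X f x ≠ 0}.ncard = (X.filter fun x => eval x f ≠ 0).card := by
  rw [← Set.ncard_coe_finset, ← Set.ncard_image_of_injective _ Subtype.val_injective]
  congr 1
  ext x
  simp [evalMap_apply, and_comm]

lemma adeg_affVanishingIdeal_sup_span_singleton [Fintype K] (f : MvPolynomial (Fin s) K) :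
    adeg (affVanishingIdeal (X : Set (Fin s → K)) ⊔ Ideal.span {f}) =
      X.card - {x : X | evalMap X f x ≠ 0}.ncard := by
  classical
  rw [affVanishingIdeal_sup_span_singleton, adeg_affVanishingIdeal, ncard_evalMap_ne_zero,
    ← Finset.card_filter_add_card_filter_not (fun x => eval x f = 0) (s := X)]
  simp

end Evaluation

section MinDist

variable {ι : Type*} {C : Submodule K (ι → K)}

lemma minDist_le_ncard {v : ι → K} (hv : v ∈ C) (hv0 : v ≠ 0) :
    minDist C ≤ {i | v i ≠ 0}.ncard :=
  Nat.sInf_le ⟨v, hv, hv0, rfl⟩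

lemma exists_ncard_eq_minDist (hC : C ≠ ⊥) :
    ∃ v ∈ C, v ≠ 0 ∧ {i | v i ≠ 0}.ncard = minDist C := by
  obtain ⟨v, hv, hv0⟩ := Submodule.exists_mem_ne_zero_of_ne_bot hC
  exact Nat.sInf_mem (s := {n | ∃ v ∈ C, v ≠ 0 ∧ {i | v i ≠ 0}.ncard = n})
    ⟨_, v, hv, hv0, rfl⟩

lemma ne_bot_of_minDist_pos (h : 0 < minDist C) : C ≠ ⊥ := by
  rintro rfl
  simp [minDist] at h

end MinDist

section ReedMuller

variable (X : Finset (Fin s → K))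

/-- The Reed–Muller-type code `C_X(d)`. -/
noncomputable abbrev reedMullerCode (d : ℕ) : Submodule K (X → K) :=
  (restrictTotalDegree (Fin s) K d).map (evalMap X)

variable {X}

lemma reedMullerCode_mono {d e : ℕ} (h : d ≤ e) : reedMullerCode X d ≤ reedMullerCode X e :=
  Submodule.map_mono fun _ hf => (mem_restrictTotalDegree _ _ _).mpr
    (((mem_restrictTotalDegree _ _ _).mp hf).trans h)

lemma evalMap_mem_reedMullerCode {f : MvPolynomial (Fin s) K} {d : ℕ} (hf : f.totalDegree ≤ d) :
    evalMap X f ∈ reedMullerCode X d :=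
  Submodule.mem_map_of_mem ((mem_restrictTotalDegree _ _ _).mpr hf)

lemma exists_mem_stdSpan_evalMap_eq {m : MonomialOrder (Fin s)} (hm : IsGradedOrder m) {d : ℕ}
    {v : X → K} (hv : v ∈ reedMullerCode X d) :
    ∃ r ∈ stdSpan m (affVanishingIdeal (X : Set (Fin s → K))),
      r.totalDegree ≤ d ∧ evalMap X r = v := by
  obtain ⟨g, hg, rfl⟩ := Submodule.mem_map.mp hv
  obtain ⟨r, hr, hgr, hdeg⟩ := exists_mem_stdSpan_sub_mem m _ g
  refine ⟨r, hr, (hm.totalDegree_le_totalDegree hdeg).trans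
    ((mem_restrictTotalDegree _ _ _).mp hg), ?_⟩
  rw [← sub_eq_zero, ← map_sub, ← LinearMap.mem_ker, ker_evalMap]
  simpa using neg_mem hgr

lemma evalMap_ne_zero_of_mem_stdSpan {m : MonomialOrder (Fin s)} {f : MvPolynomial (Fin s) K}
    (hf : f ∈ stdSpan m (affVanishingIdeal (X : Set (Fin s → K)))) (hf0 : f ≠ 0) :
    evalMap X f ≠ 0 := fun h =>
  hf0 (eq_zero_of_mem_stdSpan_of_mem hf (by simpa [ker_evalMap] using LinearMap.mem_ker.mpr h))

lemma exists_ncard_lt_of_one_lt {d : ℕ} {v : X → K} (hv : v ∈ reedMullerCode X d)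
    (hw : 1 < {x | v x ≠ 0}.ncard) :
    ∃ w ∈ reedMullerCode X (d + 1), w ≠ 0 ∧
      {x | w x ≠ 0}.ncard < {x | v x ≠ 0}.ncard := by
  obtain ⟨r, hr, rfl⟩ := Submodule.mem_map.mp hv
  obtain ⟨x, y, hx, hy, hxy⟩ := (Set.one_lt_ncard_iff (Set.toFinite _)).mp hw
  obtain ⟨i, hi⟩ := Function.ne_iff.mp (Subtype.coe_ne_coe.mpr hxy)
  set g := (MvPolynomial.X i - C ((y : Fin s → K) i)) * r
  have hg : ∀ z : X,
      evalMap X g z = ((z : Fin s → K) i - (y : Fin s → K) i) * evalMap X r z := by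
    simp [g, evalMap_apply]
  have hdeg : g.totalDegree ≤ d + 1 := by
    refine (totalDegree_mul _ _).trans ?_
    have h1 := (totalDegree_sub_C_le (MvPolynomial.X i : MvPolynomial (Fin s) K)
      ((y : Fin s → K) i)).trans_eq (totalDegree_X i)
    have h2 := (mem_restrictTotalDegree _ _ _).mp hr
    omega
  refine ⟨evalMap X g, evalMap_mem_reedMullerCode hdeg, fun h => ?_, Set.ncard_lt_ncard ?_⟩
  · have := congrFun h x
    simp only [hg, Pi.zero_apply, mul_eq_zero, sub_eq_zero] at this
    exact this.elim hi hx
  · refine (Set.ssubset_iff_of_subset fun z hz => ?_).mpr ⟨y, hy, by simp [hg]⟩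
    simp only [Set.mem_ofPred_eq, hg] at hz ⊢
    exact right_ne_zero_of_mul hz

lemma exists_mem_stdPolysOfDegree_ncard_eq_minDist {m : MonomialOrder (Fin s)}
    (hm : IsGradedOrder m) {d : ℕ}
    (hprev : 1 < minDist (reedMullerCode X (d - 1))) :
    ∃ f ∈ stdPolysOfDegree m (affVanishingIdeal (X : Set (Fin s → K))) d,
      {x | evalMap X f x ≠ 0}.ncard = minDist (reedMullerCode X d) := by
  have hC : reedMullerCode X d ≠ ⊥ := fun h =>
    ne_bot_of_minDist_pos (by omega) (eq_bot_mono (reedMullerCode_mono (Nat.sub_le d 1)) h)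
  obtain ⟨v, hv, hv0, hvw⟩ := exists_ncard_eq_minDist hC
  obtain ⟨r, hr, hrd, rfl⟩ := exists_mem_stdSpan_evalMap_eq hm hv
  have hr0 : r ≠ 0 := by
    rintro rfl
    exact hv0 (map_zero _)
  have hrd' : r.totalDegree = d := by
    by_contra hne
    have hv' := evalMap_mem_reedMullerCode (X := X) (show r.totalDegree ≤ d - 1 by omega)
    obtain ⟨w, hw, hw0, hlt⟩ :=
      exists_ncard_lt_of_one_lt hv' (hprev.trans_le (minDist_le_ncard hv' hv0))
    rw [Nat.sub_add_cancel (by omega)] at hw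
    exact (minDist_le_ncard hw hw0).not_gt (hvw ▸ hlt)
  have hc : (m.leadingCoeff r)⁻¹ ≠ 0 := inv_ne_zero (m.leadingCoeff_ne_zero_iff.mpr hr0)
  refine ⟨(m.leadingCoeff r)⁻¹ • r,
    ⟨Submodule.smul_mem _ _ hr, smul_ne_zero hc hr0, ?_, ?_⟩, ?_⟩
  · change m.leadingCoeff ((m.leadingCoeff r)⁻¹ • r) = 1
    rw [MonomialOrder.leadingCoeff, m.degree_smul_of_isRegular (Ne.isUnit hc).isRegular,
      coeff_smul, smul_eq_mul, ← MonomialOrder.leadingCoeff,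
      inv_mul_cancel₀ (m.leadingCoeff_ne_zero_iff.mpr hr0)]
  · simpa [totalDegree, support_smul_eq hc] using hrd'
  · simp [← hvw, hc]

end ReedMuller

theorem minDist_reed_muller_recursive_general [Fintype K] (X : Finset (Fin s → K))
    (m : MonomialOrder (Fin s)) (hm : IsGradedOrder m) (d : ℕ)
    (hprev : 1 < minDist ((restrictTotalDegree (Fin s) K (d - 1)).map (evalMap X))) :
    minDist ((restrictTotalDegree (Fin s) K d).map (evalMap X)) =
      adeg (affVanishingIdeal (X : Set (Fin s → K))) -
        sSup { n | ∃ f ∈ stdPolysOfDegree m (affVanishingIdeal (X : Set (Fin s → K))) d,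
          n = adeg (affVanishingIdeal (X : Set (Fin s → K)) ⊔
                Ideal.span {f}) } := by
  obtain ⟨f₀, hf₀, hw₀⟩ := exists_mem_stdPolysOfDegree_ncard_eq_minDist hm hprev
  have hgreatest : IsGreatest
      {n | ∃ f ∈ stdPolysOfDegree m (affVanishingIdeal (X : Set (Fin s → K))) d,
        n = adeg (affVanishingIdeal (X : Set (Fin s → K)) ⊔ Ideal.span {f})}
      (X.card - minDist (reedMullerCode X d)) := by
    refine ⟨⟨f₀, hf₀, by rw [adeg_affVanishingIdeal_sup_span_singleton, hw₀]⟩, ?_⟩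
    rintro n ⟨f, ⟨hf, hf0, -, hfd⟩, rfl⟩
    rw [adeg_affVanishingIdeal_sup_span_singleton]
    exact Nat.sub_le_sub_left (minDist_le_ncard (evalMap_mem_reedMullerCode hfd.le)
      (evalMap_ne_zero_of_mem_stdSpan hf hf0)) _
  have hle : minDist (reedMullerCode X d) ≤ X.card := by
    classical
    rw [← hw₀, ncard_evalMap_ne_zero]
    exact Finset.card_filter_le _ _
  rw [hgreatest.csSup_eq, adeg_affVanishingIdeal]
  exact (Nat.sub_sub_self hle).symm

/-- Corollary (recursive degree formula for the minimum distance of the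
Reed–Muller-type code `C_X(d)`). -/
theorem minDist_reed_muller_recursive [Fintype K] (X : Finset (Fin s → K))
    (m : MonomialOrder (Fin s)) (hm : IsGradedOrder m) (d : ℕ) (hd : 2 ≤ d)
    (hprev : 1 < minDist ((restrictTotalDegree (Fin s) K (d - 1)).map (evalMap X))) :
    minDist ((restrictTotalDegree (Fin s) K d).map (evalMap X)) =
      adeg (affVanishingIdeal (X : Set (Fin s → K))) -
        sSup { n | ∃ f ∈ stdPolysOfDegree m (affVanishingIdeal (X : Set (Fin s → K))) d,
          n = adeg (affVanishingIdeal (X : Set (Fin s → K)) ⊔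
                Ideal.span {f}) } :=
  minDist_reed_muller_recursive_general X m hm d hprev
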